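/- arXiv:2308.06670 — 6 statements merged into one kernel-verified Lean document; each statement's English description precedes it below -/
import Mathlib

section
/- Let G be a simple graph in the class G_{m,n}. If G has at least one cut-vertex, then G is traceable, i.e., G contains a Hamiltonian path. -/
open SimpleGraph

/-- The disjoint union of cliques `K_m ⊔ K_n`. -/
def cliqueSum (m n : ℕ) : SimpleGraph (Fin m ⊕ Fin n) :=
  (⊤ : SimpleGraph (Fin m)) ⊕g (⊤ : SimpleGraph (Fin n))

/-- The degree multiset of a finite simple graph. -/
def degreeMultiset {V : Type} [Fintype V] [DecidableEq V] (G : SimpleGraph V) [DecidableRel G.Adj] :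
    Multiset ℕ :=
  Finset.univ.val.map fun v => G.degree v

/-- Membership in the class `G_{m,n}`: a graph on `m + n` vertices whose degree multiset
equals that of `K_m ⊔ K_n` and which is not isomorphic to `K_m ⊔ K_n`. -/
def MemGmn (m n : ℕ) {V : Type} [Fintype V] [DecidableEq V] (G : SimpleGraph V) [DecidableRel G.Adj] : Prop :=
  Fintype.card V = m + n ∧
  degreeMultiset G = Multiset.replicate m (m - 1) + Multiset.replicate n (n - 1) ∧
  IsEmpty (G ≃g cliqueSum m n)

/-- A cut-vertex: a vertex whose removal increases the number of connected components. -/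
def IsCutVertex {V : Type} [Fintype V] [DecidableEq V] (G : SimpleGraph V) (v : V) : Prop :=
  Nat.card G.ConnectedComponent < Nat.card (G.induce ({v}ᶜ : Set V)).ConnectedComponent

/-!
Removing the cut vertex `v` splits the other vertices into two sides with no edge between them,
each containing a neighbour of `v`. A vertex `u` on a side `S` has all its neighbours in
`S ∪ {v}`, so `deg u ≤ |S|`, and equality forces `u` to be adjacent to all of `S ∪ {v}`.
Let `ν` vertices have degree `ν - 1` and the other `μ` degree `μ - 1`. If `μ = ν` the graph is
regular and these bounds make the two sides too large. If `μ < ν` they leave two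
configurations: both sides are cliques of size `μ = ν - 1` reaching `v` through vertices of
degree `ν - 1`; or one side is a clique of size `μ - 1` joined completely to `v`, and the other
consists of a vertex `x` of degree `μ - 1` together with a clique on the remaining vertices of
degree `ν - 1`, each of which is adjacent to exactly one of `x` and `v`. In both cases a
Hamiltonian path runs through one side, then `v`, then the other side.
-/

open Finset

namespace SimpleGraph

variable {V : Type*} {G : SimpleGraph V}

section Walks

variable [DecidableEq V]

namespace Walk

def IsHamiltonianOn {a b : V} (p : G.Walk a b) (S : Finset V) : Prop :=
  p.support.Nodup ∧ p.support.toFinset = S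

variable {a b c d : V} {S T : Finset V}

lemma isHamiltonianOn_nil : (nil : G.Walk a a).IsHamiltonianOn {a} := by
  simp [IsHamiltonianOn]

lemma IsHamiltonianOn.reverse {p : G.Walk a b} (hp : p.IsHamiltonianOn S) :
    p.reverse.IsHamiltonianOn S := by
  simpa [IsHamiltonianOn] using hp

lemma IsHamiltonianOn.append_cons {p : G.Walk a b} {q : G.Walk c d} (hp : p.IsHamiltonianOn S)
    (hq : q.IsHamiltonianOn T) (hST : Disjoint S T) (h : G.Adj b c) :
    (p.append (cons h q)).IsHamiltonianOn (S ∪ T) := by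
  obtain ⟨hpn, rfl⟩ := hp
  obtain ⟨hqn, rfl⟩ := hq
  rw [IsHamiltonianOn, support_append, support_cons, List.tail_cons, List.toFinset_append]
  exact ⟨hpn.append hqn (List.disjoint_toFinset_iff_disjoint.mp hST), rfl⟩

lemma IsHamiltonianOn.isHamiltonian [Fintype V] {p : G.Walk a b} (hp : p.IsHamiltonianOn univ) :
    p.IsHamiltonian := fun x =>
  List.count_eq_one_of_mem hp.1 (List.mem_toFinset.mp (hp.2 ▸ mem_univ x))

end Walk

lemma IsClique.exists_isHamiltonianOn_of_mem {S : Finset V} (hS : G.IsClique (S : Set V))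
    {a : V} (ha : a ∈ S) : ∃ b, ∃ p : G.Walk a b, p.IsHamiltonianOn S := by
  have hnd : (a :: (S.erase a).toList).Nodup := List.nodup_cons.mpr ⟨by simp, nodup_toList _⟩
  have hl : (a :: (S.erase a).toList).toFinset = S := by
    ext x; by_cases hx : x = a <;> simp [hx, ha]
  have hchain : (a :: (S.erase a).toList).IsChain G.Adj :=
    (hnd.pairwise_of_set_pairwise (hS.subset fun x hx => hl ▸ List.mem_toFinset.mpr hx)).isChain
  obtain ⟨p, hp⟩ : ∃ p : G.Walk a ((a :: (S.erase a).toList).getLast (List.cons_ne_nil _ _)),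
      p.support = a :: (S.erase a).toList :=
    ⟨Walk.ofSupport _ _ hchain, Walk.support_ofSupport _ _⟩
  exact ⟨_, p, by rwa [hp], by rwa [hp]⟩

lemma IsClique.exists_isHamiltonianOn {S : Finset V} (hS : G.IsClique (S : Set V))
    {a b : V} (ha : a ∈ S) (hb : b ∈ S) (hab : a ≠ b) :
    ∃ p : G.Walk a b, p.IsHamiltonianOn S := by
  obtain ⟨c, p, hp⟩ := (hS.subset (coe_subset.mpr (erase_subset b S))).exists_isHamiltonianOn_of_mem
    (mem_erase.mpr ⟨hab, ha⟩)
  have hc : c ∈ S.erase b := hp.2 ▸ List.mem_toFinset.mpr p.end_mem_support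
  have hcb := hS (mem_of_mem_erase hc) hb (ne_of_mem_erase hc)
  refine ⟨p.append (Walk.cons hcb Walk.nil), ?_⟩
  simpa [hb] using hp.append_cons Walk.isHamiltonianOn_nil
    (disjoint_singleton_right.mpr (notMem_erase b S)) hcb

end Walks

lemma exists_adj_of_reachable {v : V} {S : Finset V}
    (hS : ∀ ⦃x y⦄, x ∈ S → G.Adj x y → y ≠ v → y ∈ S) {x z : V} (hx : x ∈ S) (hz : z ∉ S)
    (hxz : G.Reachable x z) : ∃ y ∈ S, G.Adj v y := by
  obtain ⟨p⟩ := hxz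
  obtain ⟨d, -, hd₁, hd₂⟩ := p.exists_boundary_dart (S : Set V) hx hz
  have hdv : d.snd = v := by
    by_contra h
    exact hd₂ (hS hd₁ d.adj h)
  exact ⟨d.fst, hd₁, hdv ▸ d.adj.symm⟩

section Separation

variable [Fintype V] [DecidableEq V] {v : V} {P : Finset V}

/-- `P` and `(insert v P)ᶜ` are the two sides of `G - v`. -/
structure IsSeparation (G : SimpleGraph V) (v : V) (P : Finset V) : Prop where
  not_mem : v ∉ P
  mem_of_adj : ∀ ⦃x y⦄, x ∈ P → G.Adj x y → y ≠ v → y ∈ P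
  exists_adj_mem : ∃ x ∈ P, G.Adj v x
  exists_adj_mem_compl : ∃ y ∈ (insert v P)ᶜ, G.Adj v y

namespace IsSeparation

lemma compl (hs : IsSeparation G v P) : IsSeparation G v (insert v P)ᶜ where
  not_mem := by simp
  mem_of_adj x y hx hxy hy := by
    simp only [mem_compl, mem_insert, not_or] at hx ⊢
    exact ⟨hy, fun hyP => hx.2 (hs.mem_of_adj hyP hxy.symm hx.1)⟩
  exists_adj_mem := hs.exists_adj_mem_compl
  exists_adj_mem_compl := by
    obtain ⟨x, hx, hvx⟩ := hs.exists_adj_mem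
    exact ⟨x, by simp [hx, hvx.ne'], hvx⟩

lemma nonempty (hs : IsSeparation G v P) : P.Nonempty :=
  let ⟨x, hx, _⟩ := hs.exists_adj_mem
  ⟨x, hx⟩

lemma card_add_card_compl (hs : IsSeparation G v P) :
    #P + #(insert v P)ᶜ + 1 = Fintype.card V := by
  have := card_le_univ (insert v P)
  rw [card_compl, card_insert_of_notMem hs.not_mem] at *
  omega

lemma exists_isHamiltonian (hs : IsSeparation G v P) {a b c d : V} {p : G.Walk a b}
    {q : G.Walk c d} (hp : p.IsHamiltonianOn (insert v P)ᶜ) (hq : q.IsHamiltonianOn P)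
    (hb : G.Adj b v) (hc : G.Adj v c) : ∃ (u w : V) (r : G.Walk u w), r.IsHamiltonian := by
  refine ⟨a, d, (p.append (.cons hb .nil)).append (.cons hc q),
    Walk.IsHamiltonianOn.isHamiltonian ?_⟩
  have := (hp.append_cons Walk.isHamiltonianOn_nil (by simp) hb).append_cons hq
    (by simpa [hs.not_mem] using disjoint_compl_left) hc
  convert this using 1
  ext x
  by_cases hx : x = v <;> by_cases hxP : x ∈ P <;> simp [hx, hxP]

end IsSeparation

lemma exists_isSeparation_of_not_reachable {a b : ({v}ᶜ : Set V)} (hab : G.Reachable a b)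
    (hnab : ¬ (G.induce {v}ᶜ).Reachable a b) : ∃ P, IsSeparation G v P := by
  classical
  let side (c : ({v}ᶜ : Set V)) : Finset V :=
    {u | ∃ hu : u ≠ v, (G.induce {v}ᶜ).Reachable c ⟨u, hu⟩}
  have hmem : ∀ c u, u ∈ side c ↔ ∃ hu : u ≠ v, (G.induce {v}ᶜ).Reachable c ⟨u, hu⟩ := by
    simp [side]
  have hclosed : ∀ c ⦃x y⦄, x ∈ side c → G.Adj x y → y ≠ v → y ∈ side c := by
    intro c x y hx hxy hy
    obtain ⟨_, hr⟩ := (hmem ..).mp hx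
    exact (hmem ..).mpr ⟨hy, hr.trans (Adj.reachable (by simpa using hxy))⟩
  have hself : ∀ c : ({v}ᶜ : Set V), (c : V) ∈ side c := fun c => (hmem ..).mpr ⟨c.2, Reachable.rfl⟩
  have hba : (b : V) ∉ side a := fun hb => hnab (by simpa using ((hmem ..).mp hb).2)
  have hab' : (a : V) ∉ side b := fun ha => hnab (by simpa using ((hmem ..).mp ha).2.symm)
  obtain ⟨x, hx, hvx⟩ := exists_adj_of_reachable (hclosed a) (hself a) hba hab
  obtain ⟨y, hy, hvy⟩ := exists_adj_of_reachable (hclosed b) (hself b) hab' hab.symm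
  refine ⟨side a, ⟨fun hv => ((hmem ..).mp hv).1 rfl, hclosed a, ⟨x, hx, hvx⟩, ⟨y, ?_, hvy⟩⟩⟩
  simp only [mem_compl, mem_insert, not_or]
  refine ⟨hvy.ne', fun hya => hnab ?_⟩
  obtain ⟨_, hay⟩ := (hmem ..).mp hya
  obtain ⟨_, hby⟩ := (hmem ..).mp hy
  exact hay.trans hby.symm

variable [DecidableRel G.Adj]

lemma not_adj_and_disjoint_of_forall_adj_or_adj {x y : V}
    (hcover : ∀ u, u ≠ x → u ≠ y → G.Adj x u ∨ G.Adj y u)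
    (hdeg : G.degree x + G.degree y + 2 ≤ Fintype.card V) :
    ¬ G.Adj x y ∧ Disjoint (G.neighborFinset x) (G.neighborFinset y) := by
  have hunion := card_union_add_card_inter (G.neighborFinset x) (G.neighborFinset y)
  rw [card_neighborFinset_eq_degree, card_neighborFinset_eq_degree] at hunion
  constructor
  · intro hxy
    have hsub : univ ⊆ G.neighborFinset x ∪ G.neighborFinset y := fun u _ => by
      by_cases hux : u = x
      · simp [hux, hxy.symm]
      by_cases huy : u = y
      · simp [huy, hxy]
      simpa using hcover u hux huy
    have := card_le_card hsub
    rw [card_univ] at this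
    omega
  · have hsub : (univ.erase x).erase y ⊆ G.neighborFinset x ∪ G.neighborFinset y := fun u hu => by
      simp only [mem_erase] at hu
      simpa using hcover u hu.2.1 hu.1
    have h₁ := card_le_card hsub
    have h₂ := pred_card_le_card_erase (s := univ.erase x) (a := y)
    have h₃ := pred_card_le_card_erase (s := (univ : Finset V)) (a := x)
    rw [card_univ] at h₃
    rw [disjoint_iff_inter_eq_empty, ← card_eq_zero]
    omega

namespace IsSeparation

variable {u w w₁ w₂ x : V} {c : ℕ}

lemma neighborFinset_subset (hs : IsSeparation G v P) (hu : u ∈ P) :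
    G.neighborFinset u ⊆ (insert v P).erase u := fun y hy => by
  rw [mem_neighborFinset] at hy
  exact mem_erase.mpr ⟨hy.ne', mem_insert.mpr (or_iff_not_imp_left.mpr (hs.mem_of_adj hu hy))⟩

lemma degree_le_card (hs : IsSeparation G v P) (hu : u ∈ P) : G.degree u ≤ #P := by
  have := card_le_card (hs.neighborFinset_subset hu)
  rwa [card_neighborFinset_eq_degree, card_erase_of_mem (mem_insert_of_mem hu),
    card_insert_of_notMem hs.not_mem, Nat.add_sub_cancel] at this

lemma adj_of_card_le_degree (hs : IsSeparation G v P) (hu : u ∈ P) (hdeg : #P ≤ G.degree u)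
    (hw : w ∈ insert v P) (hwu : w ≠ u) : G.Adj u w := by
  by_contra h
  have hsub : G.neighborFinset u ⊆ ((insert v P).erase u).erase w := fun y hy =>
    mem_erase.mpr ⟨fun hyw => h (hyw ▸ (mem_neighborFinset ..).mp hy),
      hs.neighborFinset_subset hu hy⟩
  have := card_le_card hsub
  rw [card_neighborFinset_eq_degree, card_erase_of_mem (mem_erase.mpr ⟨hwu, hw⟩),
    card_erase_of_mem (mem_insert_of_mem hu), card_insert_of_notMem hs.not_mem] at this
  have := card_pos.mpr ⟨u, hu⟩
  omega

lemma adj_or_adj_of_card_le_degree_add_one (hs : IsSeparation G v P) (hu : u ∈ P)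
    (hdeg : #P ≤ G.degree u + 1) (hw₁ : w₁ ∈ insert v P) (hw₂ : w₂ ∈ insert v P)
    (hw₁u : w₁ ≠ u) (hw₂u : w₂ ≠ u) (hw₁₂ : w₁ ≠ w₂) : G.Adj u w₁ ∨ G.Adj u w₂ := by
  by_contra! h
  have hsub : G.neighborFinset u ⊆ (((insert v P).erase u).erase w₁).erase w₂ := fun y hy => by
    rw [mem_neighborFinset] at hy
    refine mem_erase.mpr ⟨fun hyw => h.2 (hyw ▸ hy), mem_erase.mpr ⟨fun hyw => h.1 (hyw ▸ hy), ?_⟩⟩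
    exact hs.neighborFinset_subset hu ((mem_neighborFinset ..).mpr hy)
  have hw₂mem : w₂ ∈ ((insert v P).erase u).erase w₁ := by simp [hw₁₂.symm, hw₂u, hw₂]
  have hpos := card_pos.mpr ⟨w₂, hw₂mem⟩
  have := card_le_card hsub
  rw [card_neighborFinset_eq_degree, card_erase_of_mem hw₂mem] at this
  rw [card_erase_of_mem (mem_erase.mpr ⟨hw₁u, hw₁⟩), card_erase_of_mem (mem_insert_of_mem hu),
    card_insert_of_notMem hs.not_mem] at this hpos
  omega

lemma card_lt_degree (hs : IsSeparation G v P) (h : ∀ u ∈ P, #P ≤ G.degree u) :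
    #P < G.degree v := by
  obtain ⟨y, hy, hvy⟩ := hs.exists_adj_mem_compl
  have hyP : y ∉ P := fun hyP => (mem_compl.mp hy) (mem_insert_of_mem hyP)
  have hsub : insert y P ⊆ G.neighborFinset v := fun x hx => by
    rw [mem_neighborFinset]
    rcases mem_insert.mp hx with rfl | hx
    · exact hvy
    · exact (hs.adj_of_card_le_degree hx (h x hx) (mem_insert_self v P)
        (ne_of_mem_of_not_mem hx hs.not_mem).symm).symm
  calc #P < #(insert y P) := by rw [card_insert_of_notMem hyP]; omega
    _ ≤ G.degree v := by rw [← card_neighborFinset_eq_degree]; exact card_le_card hsub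

lemma lt_card_of_le_degree (hs : IsSeparation G v P) (hP : ∀ u ∈ P, c ≤ G.degree u)
    (hv : G.degree v ≤ c) : c < #P := by
  obtain ⟨u, hu⟩ := hs.nonempty
  by_contra! h
  have := hs.card_lt_degree fun x hx => h.trans (hP x hx)
  have := (hP u hu).trans (hs.degree_le_card hu)
  omega

lemma card_ge_of_isRegularOfDegree (hs : IsSeparation G v P) (hreg : G.IsRegularOfDegree c) :
    2 * c + 3 ≤ Fintype.card V := by
  have h₁ := hs.lt_card_of_le_degree (c := c) (fun u _ => (hreg u).ge) (hreg v).le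
  have h₂ := hs.compl.lt_card_of_le_degree (c := c) (fun u _ => (hreg u).ge) (hreg v).le
  have := hs.card_add_card_compl
  omega

lemma isClique (hs : IsSeparation G v P) (hP : ∀ u ∈ P, #P ≤ G.degree u + 1)
    (hv : ∀ u ∈ P, G.Adj u v → #P ≤ G.degree u) : G.IsClique (P : Set V) := by
  intro x hx y hy hxy
  have hxv : v ≠ x := (ne_of_mem_of_not_mem hx hs.not_mem).symm
  rcases hs.adj_or_adj_of_card_le_degree_add_one hx (hP x hx) (mem_insert_of_mem hy)
    (mem_insert_self v P) (Ne.symm hxy) hxv (ne_of_mem_of_not_mem hy hs.not_mem) with h | h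
  · exact h
  · exact hs.adj_of_card_le_degree hx (hv x hx h) (mem_insert_of_mem hy) (Ne.symm hxy)

lemma isClique_erase (hs : IsSeparation G v P) (hx : x ∈ P)
    (hP : ∀ u ∈ P, u ≠ x → #P ≤ G.degree u + 1)
    (hdisj : Disjoint (G.neighborFinset x) (G.neighborFinset v)) :
    G.IsClique (P.erase x : Set V) := by
  intro u hu u' hu' huu'
  simp only [coe_erase, Set.mem_sdiff, mem_coe, Set.mem_singleton_iff] at hu hu'
  have hvP : ∀ {y}, y ∈ P → v ≠ y := fun hy => (ne_of_mem_of_not_mem hy hs.not_mem).symm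
  have hpair := fun w (hw : w ∈ insert v P) (hwu : w ≠ u) (hw' : u' ≠ w) =>
    hs.adj_or_adj_of_card_le_degree_add_one hu.1 (hP u hu.1 hu.2) (mem_insert_of_mem hu'.1) hw
      (Ne.symm huu') hwu hw'
  rcases hpair x (mem_insert_of_mem hx) (Ne.symm hu.2) hu'.2 with h | hux
  · exact h
  rcases hpair v (mem_insert_self v P) (hvP hu.1) (hvP hu'.1).symm with h | huv
  · exact h
  exact (Finset.disjoint_left.mp hdisj ((mem_neighborFinset ..).mpr hux.symm)
    ((mem_neighborFinset ..).mpr huv.symm)).elim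

end IsSeparation

end Separation

section DegreeSplit

variable [Fintype V] [DecidableRel G.Adj] {μ ν : ℕ}

/-- The degree data of `K_μ ⊔ K_ν` with `μ < ν`. -/
structure DegreeSplit (G : SimpleGraph V) [DecidableRel G.Adj] (μ ν : ℕ) : Prop where
  lt : μ < ν
  card_eq : Fintype.card V = μ + ν
  card_filter_degree_eq : #{u | G.degree u = ν - 1} = ν
  degree_eq_of_ne : ∀ u, G.degree u ≠ ν - 1 → G.degree u = μ - 1

lemma DegreeSplit.card_filter_degree_ne (hd : G.DegreeSplit μ ν) :
    #{u | G.degree u ≠ ν - 1} = μ := by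
  have := card_filter_add_card_filter_not (s := univ) (fun u => G.degree u = ν - 1)
  rw [hd.card_filter_degree_eq, card_univ, hd.card_eq] at this
  simp only [ne_eq]
  omega

variable [DecidableEq V] {v x : V} {P : Finset V}

lemma DegreeSplit.neighborFinset_eq (hd : G.DegreeSplit μ ν)
    (hadj : ∀ u, u ≠ v → G.degree u = ν - 1 → G.Adj u v) :
    G.degree v = ν - 1 ∧ G.neighborFinset v = ({u | G.degree u = ν - 1} : Finset V).erase v := by
  have hsub : ({u | G.degree u = ν - 1} : Finset V).erase v ⊆ G.neighborFinset v := fun u hu => by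
    simp only [mem_erase, mem_filter, mem_univ, true_and] at hu
    exact (mem_neighborFinset ..).mpr (hadj u hu.1 hu.2).symm
  have hle := card_le_card hsub
  rw [card_neighborFinset_eq_degree] at hle
  have hv : G.degree v = ν - 1 := by
    by_contra hv
    rw [erase_eq_of_notMem (by simpa using hv), hd.card_filter_degree_eq,
      hd.degree_eq_of_ne v hv] at hle
    have := hd.lt
    omega
  refine ⟨hv, (eq_of_subset_of_card_le hsub ?_).symm⟩
  rw [card_neighborFinset_eq_degree, card_erase_of_mem (by simpa using hv),
    hd.card_filter_degree_eq, hv]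

namespace IsSeparation

lemma exists_degree_eq_of_degree_ne (hd : G.DegreeSplit μ ν) (hs : IsSeparation G v P)
    (hv : G.degree v ≠ ν - 1) : ∃ u ∈ P, G.degree u = ν - 1 := by
  by_contra! h
  have hlt := hs.lt_card_of_le_degree (c := μ - 1) (fun u hu => (hd.degree_eq_of_ne u (h u hu)).ge)
    (hd.degree_eq_of_ne v hv).le
  have hsub : P ⊆ ({u | G.degree u ≠ ν - 1} : Finset V).erase v := fun u hu => by
    simp [h u hu, ne_of_mem_of_not_mem hu hs.not_mem]
  have := card_le_card hsub
  rw [card_erase_of_mem (by simpa using hv), hd.card_filter_degree_ne] at this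
  omega

lemma exists_isHamiltonian_of_degree_eq (hd : G.DegreeSplit μ ν) (hs : IsSeparation G v P)
    {u₁ u₂ : V} (hu₁ : u₁ ∈ P) (hdu₁ : G.degree u₁ = ν - 1) (hu₂ : u₂ ∈ (insert v P)ᶜ)
    (hdu₂ : G.degree u₂ = ν - 1) : ∃ (u w : V) (r : G.Walk u w), r.IsHamiltonian := by
  have hP := hdu₁ ▸ hs.degree_le_card hu₁
  have hQ := hdu₂ ▸ hs.compl.degree_le_card hu₂
  have hcard := hs.card_add_card_compl
  have := hd.card_eq
  have := hd.lt
  have hadj : ∀ u, u ≠ v → G.degree u = ν - 1 → G.Adj u v := fun u huv hdu => by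
    by_cases hu : u ∈ P
    · exact hs.adj_of_card_le_degree hu (by omega) (mem_insert_self v P) huv.symm
    · exact hs.compl.adj_of_card_le_degree (by simp [hu, huv]) (by omega) (mem_insert_self _ _)
        huv.symm
  have hbig : ∀ u, G.Adj u v → G.degree u = ν - 1 := fun u huv => by
    have hu := (hd.neighborFinset_eq hadj).2 ▸ (mem_neighborFinset ..).mpr huv.symm
    exact (mem_filter.mp (mem_of_mem_erase hu)).2
  have hclique : ∀ {S : Finset V}, IsSeparation G v S → #S = ν - 1 → G.IsClique (S : Set V) :=
    fun {S} hS hSc => hS.isClique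
      (fun u _ => by
        rcases eq_or_ne (G.degree u) (ν - 1) with h | h
        · omega
        · rw [hd.degree_eq_of_ne u h]; omega)
      (fun u _ huv => by rw [hbig u huv]; omega)
  obtain ⟨_, p, hp⟩ := (hclique hs.compl (by omega)).exists_isHamiltonianOn_of_mem hu₂
  obtain ⟨_, q, hq⟩ := (hclique hs (by omega)).exists_isHamiltonianOn_of_mem hu₁
  exact hs.exists_isHamiltonian hp.reverse hq
    (hadj u₂ (by simp at hu₂; exact hu₂.1) hdu₂)
    (hadj u₁ (ne_of_mem_of_not_mem hu₁ hs.not_mem) hdu₁).symm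

lemma card_add_one_eq_and_exists_of_forall_degree_ne (hd : G.DegreeSplit μ ν)
    (hs : IsSeparation G v P) (hP : ∀ u ∈ P, G.degree u ≠ ν - 1) (hv : G.degree v = ν - 1) :
    #P + 1 = μ ∧ ∃ x ∈ (insert v P)ᶜ, G.degree x = #P ∧
      ∀ u ∈ (insert v P)ᶜ, u ≠ x → G.degree u = ν - 1 := by
  obtain ⟨x, hx, hdx⟩ : ∃ x ∈ (insert v P)ᶜ, G.degree x ≠ ν - 1 := by
    by_contra! h
    have hlt := hs.compl.lt_card_of_le_degree (c := ν - 1) (fun u hu => (h u hu).ge) hv.le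
    have hsub : (insert v P)ᶜ ⊆ ({u | G.degree u = ν - 1} : Finset V).erase v := fun u hu => by
      simp only [mem_compl, mem_insert, not_or] at hu
      simp [h u (by simp [hu.1, hu.2]), hu.1]
    have := card_le_card hsub
    rw [card_erase_of_mem (by simpa using hv), hd.card_filter_degree_eq] at this
    omega
  simp only [mem_compl, mem_insert, not_or] at hx
  set A : Finset V := {u | G.degree u ≠ ν - 1}
  have hxA : x ∈ A := by simpa [A] using hdx
  have hsub : P ⊆ A.erase x := fun u hu =>
    mem_erase.mpr ⟨ne_of_mem_of_not_mem hu hx.2, by simpa [A] using hP u hu⟩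
  have hle := card_le_card hsub
  rw [card_erase_of_mem hxA, hd.card_filter_degree_ne] at hle
  obtain ⟨u₀, hu₀⟩ := hs.nonempty
  have hge := hd.degree_eq_of_ne u₀ (hP u₀ hu₀) ▸ hs.degree_le_card hu₀
  have hpos := card_pos.mpr ⟨x, hxA⟩
  rw [hd.card_filter_degree_ne] at hpos
  have hPA : P = A.erase x := eq_of_subset_of_card_le hsub (by
    rw [card_erase_of_mem hxA, hd.card_filter_degree_ne]; omega)
  refine ⟨by omega, x, by simp [hx.1, hx.2], by rw [hd.degree_eq_of_ne x hdx]; omega,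
    fun u hu hux => ?_⟩
  by_contra hdu
  simp only [mem_compl, mem_insert, not_or] at hu
  exact hu.2 (hPA ▸ mem_erase.mpr ⟨hux, by simpa [A] using hdu⟩)

lemma not_adj_and_disjoint_of_degree_eq_card (hs : IsSeparation G v P) {d : ℕ}
    (hP : ∀ u ∈ P, G.degree u = #P) (hx : x ∈ (insert v P)ᶜ) (hdx : G.degree x = #P)
    (hQ : ∀ u ∈ (insert v P)ᶜ, u ≠ x → G.degree u = d) (hv : G.degree v = d)
    (hQcard : #(insert v P)ᶜ = d + 1) :
    ¬ G.Adj x v ∧ Disjoint (G.neighborFinset x) (G.neighborFinset v) := by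
  have hxv : x ≠ v := by simp only [mem_compl, mem_insert, not_or] at hx; exact hx.1
  refine not_adj_and_disjoint_of_forall_adj_or_adj (fun u hux huv => ?_)
    (by have := hs.card_add_card_compl; omega)
  by_cases hu : u ∈ P
  · exact Or.inr (hs.adj_of_card_le_degree hu (hP u hu).ge (mem_insert_self v P) huv.symm).symm
  have huQ : u ∈ (insert v P)ᶜ := by simp [hu, huv]
  exact (hs.compl.adj_or_adj_of_card_le_degree_add_one huQ (by rw [hQ u huQ hux]; omega)
    (mem_insert_of_mem hx) (mem_insert_self v _) hux.symm huv.symm hxv).imp Adj.symm Adj.symm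

lemma exists_isHamiltonian_of_degree_eq_card (hs : IsSeparation G v P) {d : ℕ}
    (hP : ∀ u ∈ P, G.degree u = #P) (hx : x ∈ (insert v P)ᶜ) (hdx : G.degree x = #P)
    (hQ : ∀ u ∈ (insert v P)ᶜ, u ≠ x → G.degree u = d) (hv : G.degree v = d)
    (hQcard : #(insert v P)ᶜ = d + 1) (hlt : #P < d) :
    ∃ (u w : V) (r : G.Walk u w), r.IsHamiltonian := by
  obtain ⟨hxv, hdisj⟩ := hs.not_adj_and_disjoint_of_degree_eq_card hP hx hdx hQ hv hQcard
  have hB : G.IsClique ((insert v P)ᶜ.erase x : Set V) :=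
    hs.compl.isClique_erase hx (fun u hu hux => by rw [hQ u hu hux]; omega) hdisj
  obtain ⟨t, ht, hvt⟩ : ∃ t ∈ (insert v P)ᶜ.erase x, G.Adj v t := by
    obtain ⟨t, htN, htP⟩ := not_subset.mp fun h : G.neighborFinset v ⊆ P => by
      have := card_le_card h
      rw [card_neighborFinset_eq_degree] at this
      omega
    rw [mem_neighborFinset] at htN
    exact ⟨t, mem_erase.mpr ⟨fun h => hxv (h ▸ htN.symm), by simp [htP, htN.ne']⟩, htN⟩
  obtain ⟨w, hw, hxw⟩ : ∃ w ∈ (insert v P)ᶜ.erase x, G.Adj x w := by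
    obtain ⟨w, hw⟩ : (G.neighborFinset x).Nonempty := card_pos.mp (by
      rw [card_neighborFinset_eq_degree, hdx]; exact card_pos.mpr hs.nonempty)
    rw [mem_neighborFinset] at hw
    exact ⟨w, mem_erase.mpr ⟨hw.ne', hs.compl.mem_of_adj hx hw fun h => hxv (h ▸ hw)⟩, hw⟩
  have hwt : w ≠ t := fun h => Finset.disjoint_left.mp hdisj ((mem_neighborFinset ..).mpr hxw)
    ((mem_neighborFinset ..).mpr (h ▸ hvt))
  -- the path is `x, w, …, t` on the second side, then `v`, then the clique `P`
  obtain ⟨p, hp⟩ := hB.exists_isHamiltonianOn hw ht hwt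
  have hp' := (Walk.isHamiltonianOn_nil (G := G)).append_cons hp
    (disjoint_singleton_left.mpr (notMem_erase x _)) hxw
  rw [← insert_eq, insert_erase hx] at hp'
  obtain ⟨u₀, hu₀⟩ := hs.nonempty
  obtain ⟨_, q, hq⟩ := (hs.isClique (fun u hu => by rw [hP u hu]; omega)
    (fun u hu _ => (hP u hu).ge)).exists_isHamiltonianOn_of_mem hu₀
  exact hs.exists_isHamiltonian hp' hq hvt.symm (hs.adj_of_card_le_degree hu₀ (hP u₀ hu₀).ge
    (mem_insert_self v P) (ne_of_mem_of_not_mem hu₀ hs.not_mem).symm).symm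

lemma exists_isHamiltonian_of_forall_degree_ne (hd : G.DegreeSplit μ ν) (hs : IsSeparation G v P)
    (hP : ∀ u ∈ P, G.degree u ≠ ν - 1) : ∃ (u w : V) (r : G.Walk u w), r.IsHamiltonian := by
  by_cases hv : G.degree v = ν - 1
  · obtain ⟨hμ, x, hx, hdx, hQ⟩ := hs.card_add_one_eq_and_exists_of_forall_degree_ne hd hP hv
    have := hs.card_add_card_compl
    have := hd.card_eq
    have := hd.lt
    exact hs.exists_isHamiltonian_of_degree_eq_card
      (fun u hu => by rw [hd.degree_eq_of_ne u (hP u hu)]; omega) hx hdx hQ hv (by omega) (by omega)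
  · obtain ⟨u, hu, hdu⟩ := hs.exists_degree_eq_of_degree_ne hd hv
    exact absurd hdu (hP u hu)

end IsSeparation

lemma DegreeSplit.exists_isHamiltonian (hd : G.DegreeSplit μ ν) (hs : IsSeparation G v P) :
    ∃ (u w : V) (r : G.Walk u w), r.IsHamiltonian := by
  by_cases hP : ∀ u ∈ P, G.degree u ≠ ν - 1
  · exact hs.exists_isHamiltonian_of_forall_degree_ne hd hP
  by_cases hQ : ∀ u ∈ (insert v P)ᶜ, G.degree u ≠ ν - 1
  · exact hs.compl.exists_isHamiltonian_of_forall_degree_ne hd hQ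
  push Not at hP hQ
  obtain ⟨u₁, hu₁, hdu₁⟩ := hP
  obtain ⟨u₂, hu₂, hdu₂⟩ := hQ
  exact hs.exists_isHamiltonian_of_degree_eq hd hu₁ hdu₁ hu₂ hdu₂

end DegreeSplit

end SimpleGraph

section

variable {V : Type} [Fintype V] [DecidableEq V] {G : SimpleGraph V} {v : V}

lemma IsCutVertex.exists_not_reachable (h : IsCutVertex G v) :
    ∃ a b : ({v}ᶜ : Set V), G.Reachable a b ∧ ¬ (G.induce {v}ᶜ).Reachable a b := by
  classical
  let f : G.induce ({v}ᶜ : Set V) →g G := (Embedding.induce _).toHom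
  obtain ⟨c₁, c₂, hc, hne⟩ := Function.not_injective_iff.mp fun hinj =>
    (Nat.card_le_card_of_injective (ConnectedComponent.map f) hinj).not_gt h
  revert hc hne
  refine ConnectedComponent.ind₂ (fun a b hc hne => ?_) c₁ c₂
  rw [ConnectedComponent.map_mk, ConnectedComponent.map_mk, ConnectedComponent.eq] at hc
  exact ⟨a, b, hc, fun hab => hne (ConnectedComponent.eq.mpr hab)⟩

lemma degree_eq_or_of_degreeMultiset_eq [DecidableRel G.Adj] {μ ν a b : ℕ}
    (h : degreeMultiset G = Multiset.replicate μ a + Multiset.replicate ν b) (u : V) :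
    G.degree u = a ∨ G.degree u = b := by
  have hu : G.degree u ∈ degreeMultiset G := Multiset.mem_map_of_mem _ (mem_univ u)
  rw [h, Multiset.mem_add, Multiset.mem_replicate, Multiset.mem_replicate] at hu
  exact hu.imp And.right And.right

lemma DegreeSplit.of_degreeMultiset_eq [DecidableRel G.Adj] {μ ν : ℕ}
    (h : degreeMultiset G = Multiset.replicate μ (μ - 1) + Multiset.replicate ν (ν - 1))
    (hμν : μ < ν) : G.DegreeSplit μ ν where
  lt := hμν
  card_eq := by simpa [degreeMultiset] using congrArg Multiset.card h
  card_filter_degree_eq := by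
    have hcount := congrArg (Multiset.count (ν - 1)) h
    rw [Multiset.count_add, Multiset.count_replicate, Multiset.count_replicate, if_pos rfl,
      degreeMultiset, Multiset.count_map] at hcount
    rw [card_def, filter_val]
    -- `μ - 1 = ν - 1` happens only for `μ = 0`
    split_ifs at hcount <;> simp only [eq_comm (a := ν - 1)] at hcount <;> omega
  degree_eq_of_ne u hu := (degree_eq_or_of_degreeMultiset_eq h u).resolve_right hu

end

theorem stmt_1 (m n : ℕ) {V : Type} [Fintype V] [DecidableEq V] (G : SimpleGraph V) [DecidableRel G.Adj]
    (hG : MemGmn m n G) (hcut : ∃ v, IsCutVertex G v) :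
    ∃ (u w : V) (p : G.Walk u w), p.IsHamiltonian := by
  obtain ⟨v, hv⟩ := hcut
  obtain ⟨a, b, hab, hnab⟩ := hv.exists_not_reachable
  obtain ⟨P, hs⟩ := exists_isSeparation_of_not_reachable hab hnab
  rcases lt_trichotomy m n with hmn | rfl | hmn
  · exact (DegreeSplit.of_degreeMultiset_eq hG.2.1 hmn).exists_isHamiltonian hs
  · have hreg : G.IsRegularOfDegree (m - 1) := fun u =>
      (degree_eq_or_of_degreeMultiset_eq hG.2.1 u).elim id id
    have := hs.card_ge_of_isRegularOfDegree hreg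
    have := hG.1
    omega
  · exact (DegreeSplit.of_degreeMultiset_eq (by rw [hG.2.1, add_comm]) hmn).exists_isHamiltonian hs
end

section
/- Let n be a natural number and let G be a simple graph on 2n−1 vertices having exactly n vertices of degree n−1 and exactly n−1 vertices of degree n, such that G is not isomorphic to the complete bipartite graph K_{n,n−1}. Then G is traceable, i.e., G contains a Hamiltonian path. -/
/-!
Every vertex has degree at least `n - 1` in a graph on `2n - 1` vertices, so any two non-adjacent
vertices have degree sum at least `|V| - 1`: this is Ore's condition for traceability. Under it,
two non-adjacent vertices have a common neighbour, so every nonempty proper vertex set has an edge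
leaving it. A path `v₀ … v_k` that misses a vertex can then be lengthened: either an end has a
neighbour off the path, or all neighbours of `v₀` and `v_k` lie on it, and pigeonhole on their
positions gives `i` with `v₀ ~ v_{i+1}` and `v_k ~ v_i`, so the path closes into the cycle
`v₀ … v_i v_k … v_{i+1}`; opening this cycle at a vertex with a neighbour off it gives a longer
path.
-/

open SimpleGraph

/-- For nonempty `l`, `(l ++ l).IsChain R` says that `l` is a closed chain: it also relates the
last entry of `l` to the first. -/
theorem List.IsChain.exists_cons_perm_of_append_self {α : Type*} {R : α → α → Prop} {l : List α}
    (h : (l ++ l).IsChain R) {y : α} (hy : y ∈ l) : ∃ t, (y :: t).Perm l ∧ (y :: t).IsChain R := by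
  obtain ⟨s, t, rfl⟩ := List.append_of_mem hy
  refine ⟨t ++ s, ?_, h.infix ⟨s, y :: t, by simp⟩⟩
  simpa using List.perm_append_comm (l₁ := y :: t) (l₂ := s)

theorem List.exists_eq_append_cons_cons_of_idxOf_eq_succ {α : Type*} [BEq α] [LawfulBEq α]
    {l : List α} {a b : α} (hb : b ∈ l) (hab : l.idxOf b = l.idxOf a + 1) :
    ∃ A B, l = A ++ a :: b :: B := by
  have hbl := List.idxOf_lt_length_iff.2 hb
  have hal : l.idxOf a < l.length := by omega
  refine ⟨l.take (l.idxOf a), l.drop (l.idxOf b + 1), ?_⟩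
  conv_lhs => rw [← List.take_append_drop (l.idxOf a) l, List.drop_eq_getElem_cons hal,
    List.getElem_idxOf, ← hab, List.drop_eq_getElem_cons hbl, List.getElem_idxOf]

namespace SimpleGraph

variable {V : Type*} {G : SimpleGraph V}

theorem exists_nodup_isChain_length_succ_of_perm {l c : List V} (hl : l.Nodup) (hcl : c.Perm l)
    (hc : c.IsChain G.Adj) {y z : V} (hy : c.head? = some y) (hz : z ∉ l) (hyz : G.Adj y z) :
    ∃ l' : List V, l'.Nodup ∧ l'.IsChain G.Adj ∧ l'.length = l.length + 1 :=
  ⟨z :: c, List.nodup_cons.2 ⟨hcl.mem_iff.not.2 hz, hcl.nodup_iff.2 hl⟩,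
    List.isChain_cons.2 ⟨fun _ hy' => Option.mem_unique hy hy' ▸ hyz.symm, hc⟩,
    by simp [hcl.length_eq]⟩

variable [Fintype V] [DecidableEq V] [DecidableRel G.Adj]

theorem exists_adj_adj_of_card_le_degree_add_degree {u v : V} (huv : u ≠ v) (hadj : ¬G.Adj u v)
    (h : Fintype.card V ≤ G.degree u + G.degree v + 1) : ∃ z, G.Adj u z ∧ G.Adj v z := by
  have hu : G.neighborFinset u ⊆ (Finset.univ.erase u).erase v := fun z hz => by
    rw [mem_neighborFinset] at hz
    simp [hz.ne', show z ≠ v by rintro rfl; exact hadj hz]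
  have hv : G.neighborFinset v ⊆ (Finset.univ.erase u).erase v := fun z hz => by
    rw [mem_neighborFinset] at hz
    simp [hz.ne', show z ≠ u by rintro rfl; exact hadj hz.symm]
  have hcard : ((Finset.univ.erase u).erase v).card = Fintype.card V - 2 := by
    rw [Finset.card_erase_of_mem (by simp [huv.symm]), Finset.card_erase_of_mem (Finset.mem_univ _),
      Finset.card_univ]
    omega
  obtain ⟨z, hz⟩ := Finset.inter_nonempty_of_card_lt_card_add_card hu hv (by
    rw [hcard, card_neighborFinset_eq_degree, card_neighborFinset_eq_degree]
    have := Fintype.one_lt_card_iff.2 ⟨u, v, huv⟩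
    omega)
  simp only [Finset.mem_inter, mem_neighborFinset] at hz
  exact ⟨z, hz⟩

theorem exists_adj_notMem_of_ore
    (hG : ∀ u v, u ≠ v → ¬G.Adj u v → Fintype.card V ≤ G.degree u + G.degree v + 1)
    {s : Set V} {u x : V} (hu : u ∈ s) (hx : x ∉ s) : ∃ y ∈ s, ∃ z ∉ s, G.Adj y z := by
  by_cases hux : G.Adj u x
  · exact ⟨u, hu, x, hx, hux⟩
  have hne : u ≠ x := ne_of_mem_of_not_mem hu hx
  obtain ⟨z, huz, hxz⟩ := exists_adj_adj_of_card_le_degree_add_degree hne hux (hG u x hne hux)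
  by_cases hz : z ∈ s
  · exact ⟨z, hz, x, hx, hxz.symm⟩
  · exact ⟨u, hu, z, hz, huz⟩

theorem exists_eq_append_cons_cons_adj_adj {l : List V} (hl : l.Nodup) {u w : V}
    (hu : l.head? = some u) (hw : l.getLast? = some w)
    (hNu : ∀ z, G.Adj u z → z ∈ l) (hNw : ∀ z, G.Adj w z → z ∈ l)
    (hdeg : l.length ≤ G.degree u + G.degree w) :
    ∃ A a b B, l = A ++ a :: b :: B ∧ G.Adj w a ∧ G.Adj u b := by
  rw [List.head?_eq_getElem?] at hu
  rw [List.getLast?_eq_getElem?] at hw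
  have hpos : 0 < l.length := List.length_pos_iff.2 (by rintro rfl; simp at hu)
  have hu' : l.idxOf u = 0 := by
    obtain ⟨h, rfl⟩ := List.getElem?_eq_some_iff.1 hu
    exact hl.idxOf_getElem _ h
  have hw' : l.idxOf w = l.length - 1 := by
    obtain ⟨h, rfl⟩ := List.getElem?_eq_some_iff.1 hw
    exact hl.idxOf_getElem _ h
  set s := Finset.Icc 1 (l.length - 1)
  have hsu : (G.neighborFinset u).image l.idxOf ⊆ s := by
    simp only [Finset.image_subset_iff, mem_neighborFinset, s, Finset.mem_Icc]
    intro z hz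
    have hzl := List.idxOf_lt_length_iff.2 (hNu z hz)
    have : l.idxOf z ≠ l.idxOf u := fun h => hz.ne ((List.idxOf_inj (hNu z hz)).1 h).symm
    omega
  have hsw : (G.neighborFinset w).image (l.idxOf · + 1) ⊆ s := by
    simp only [Finset.image_subset_iff, mem_neighborFinset, s, Finset.mem_Icc]
    intro z hz
    have hzl := List.idxOf_lt_length_iff.2 (hNw z hz)
    have : l.idxOf z ≠ l.idxOf w := fun h => hz.ne ((List.idxOf_inj (hNw z hz)).1 h).symm
    omega
  have hcu : ((G.neighborFinset u).image l.idxOf).card = G.degree u := by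
    rw [Finset.card_image_of_injOn, card_neighborFinset_eq_degree]
    intro x hx y _ hxy
    exact (List.idxOf_inj (hNu x ((mem_neighborFinset ..).1 hx))).1 hxy
  have hcw : ((G.neighborFinset w).image (l.idxOf · + 1)).card = G.degree w := by
    rw [Finset.card_image_of_injOn, card_neighborFinset_eq_degree]
    intro x hx y _ hxy
    exact (List.idxOf_inj (hNw x ((mem_neighborFinset ..).1 hx))).1 (Nat.succ_injective hxy)
  obtain ⟨j, hj⟩ := Finset.inter_nonempty_of_card_lt_card_add_card hsu hsw (by
    rw [hcu, hcw, Nat.card_Icc]; omega)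
  simp only [Finset.mem_inter, Finset.mem_image, mem_neighborFinset] at hj
  obtain ⟨⟨b, hub, rfl⟩, a, hwa, hab⟩ := hj
  obtain ⟨A, B, hl⟩ := List.exists_eq_append_cons_cons_of_idxOf_eq_succ (hNu b hub) hab.symm
  exact ⟨A, a, b, B, hl, hwa, hub⟩

theorem exists_perm_isChain_append_self_of_ore
    (hG : ∀ u v, u ≠ v → ¬G.Adj u v → Fintype.card V ≤ G.degree u + G.degree v + 1)
    {l : List V} (hl : l.Nodup) (hc : l.IsChain G.Adj) (hlt : l.length < Fintype.card V)
    {u w : V} (hu : l.head? = some u) (hw : l.getLast? = some w) (huw : u ≠ w)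
    (hNu : ∀ z, G.Adj u z → z ∈ l) (hNw : ∀ z, G.Adj w z → z ∈ l) :
    ∃ c : List V, c.Perm l ∧ (c ++ c).IsChain G.Adj := by
  by_cases hadj : G.Adj u w
  · exact ⟨l, List.Perm.refl l, hc.append hc (by simp [hu, hw, hadj.symm])⟩
  obtain ⟨A, a, b, B, rfl, hwa, hub⟩ :=
    exists_eq_append_cons_cons_adj_adj hl hu hw hNu hNw (by have := hG u w huw hadj; omega)
  have hA : (A ++ [a]).IsChain G.Adj := hc.infix ⟨[], b :: B, by simp⟩
  have hB : (b :: B).reverse.IsChain G.Adj :=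
    List.isChain_reverse.2 ((hc.infix ⟨A ++ [a], [], by simp⟩).imp fun _ _ h => h.symm)
  have hc' : (A ++ a :: (b :: B).reverse).IsChain G.Adj := by
    have hw' : (b :: B).getLast? = some w := by simpa using hw
    rw [List.getLast?_cons, Option.some_inj] at hw'
    simpa using hA.append hB (by simpa [hw'] using hwa.symm)
  refine ⟨A ++ a :: (b :: B).reverse, ((List.reverse_perm _).cons a).append_left A,
    hc'.append hc' ?_⟩
  have hu' : (A ++ a :: (b :: B).reverse).head? = some u := by simpa using hu
  rw [hu']
  simpa [List.getLast?_cons] using hub.symm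

theorem exists_nodup_isChain_length_succ_of_ore
    (hG : ∀ u v, u ≠ v → ¬G.Adj u v → Fintype.card V ≤ G.degree u + G.degree v + 1)
    {l : List V} (hl : l.Nodup) (hc : l.IsChain G.Adj) (hne : l ≠ [])
    (hlt : l.length < Fintype.card V) :
    ∃ l' : List V, l'.Nodup ∧ l'.IsChain G.Adj ∧ l'.length = l.length + 1 := by
  obtain ⟨x, -, hx⟩ := Finset.exists_mem_notMem_of_card_lt_card (s := l.toFinset)
    (t := Finset.univ) (l.toFinset_card_le.trans_lt (hlt.trans_eq Finset.card_univ.symm))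
  rw [List.mem_toFinset] at hx
  obtain ⟨u, t, rfl⟩ := List.exists_cons_of_ne_nil hne
  set w := (u :: t).getLast hne
  by_cases hu : ∃ z ∉ u :: t, G.Adj u z
  · obtain ⟨z, hz, huz⟩ := hu
    exact exists_nodup_isChain_length_succ_of_perm hl (.refl _) hc rfl hz huz
  by_cases hw : ∃ z ∉ u :: t, G.Adj w z
  · obtain ⟨z, hz, hwz⟩ := hw
    exact exists_nodup_isChain_length_succ_of_perm hl (List.reverse_perm _)
      (List.isChain_reverse.2 (hc.imp fun _ _ h => h.symm))
      (by rw [List.head?_reverse, List.getLast?_eq_some_getLast hne]) hz hwz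
  push Not at hu hw
  obtain ⟨y, hy, z, hz, hyz⟩ :=
    exists_adj_notMem_of_ore hG (s := {v | v ∈ u :: t}) List.mem_cons_self hx
  have huw : u ≠ w := by
    rcases t with _ | ⟨v, t⟩
    · obtain rfl : y = u := by simpa using hy
      exact absurd hyz (hu z hz)
    · intro h
      refine (List.nodup_cons.1 hl).1 ?_
      rw [h, show w = (v :: t).getLast (List.cons_ne_nil v t) from List.getLast_cons_cons ..]
      exact List.getLast_mem _
  obtain ⟨c, hcp, hcc⟩ := exists_perm_isChain_append_self_of_ore hG hl hc hlt rfl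
    (List.getLast?_eq_some_getLast hne) huw (fun z h => by_contra fun hz => hu z hz h)
    (fun z h => by_contra fun hz => hw z hz h)
  obtain ⟨s, hsp, hsc⟩ := hcc.exists_cons_perm_of_append_self (hcp.mem_iff.2 hy)
  exact exists_nodup_isChain_length_succ_of_perm hl (hsp.trans hcp) hsc rfl hz hyz

theorem exists_isHamiltonian_of_ore [Nonempty V]
    (hG : ∀ u v, u ≠ v → ¬G.Adj u v → Fintype.card V ≤ G.degree u + G.degree v + 1) :
    ∃ (u w : V) (p : G.Walk u w), p.IsHamiltonian := by
  have hpath : ∀ k < Fintype.card V,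
      ∃ l : List V, l.Nodup ∧ l.IsChain G.Adj ∧ l.length = k + 1 := by
    intro k hk
    induction k with
    | zero => exact ⟨[Classical.arbitrary V], List.nodup_singleton _, .singleton _, rfl⟩
    | succ k ih =>
      obtain ⟨l, hl, hc, hlen⟩ := ih (by omega)
      rw [← hlen] at hk ⊢
      exact exists_nodup_isChain_length_succ_of_ore hG hl hc
        (List.ne_nil_of_length_pos (by omega)) hk
  obtain ⟨l, hl, hc, hlen⟩ := hpath (Fintype.card V - 1) (by simp [Fintype.card_pos])
  have hne : l ≠ [] := List.ne_nil_of_length_pos (by omega)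
  refine ⟨_, _, Walk.ofSupport l hne hc, ?_⟩
  rw [Walk.isHamiltonian_iff_isPath_and_length_eq, Walk.isPath_def, Walk.support_ofSupport,
    Walk.length_ofSupport]
  exact ⟨hl, by omega⟩

end SimpleGraph

theorem stmt_7 (n : ℕ) {V : Type} [Fintype V] [DecidableEq V] (G : SimpleGraph V) [DecidableRel G.Adj]
    (hcard : Fintype.card V = 2 * n - 1)
    (hdeg : degreeMultiset G =
      Multiset.replicate n (n - 1) + Multiset.replicate (n - 1) n)
    (hnotiso : IsEmpty (G ≃g completeBipartiteGraph (Fin n) (Fin (n - 1)))) :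
    ∃ (u w : V) (p : G.Walk u w), p.IsHamiltonian := by
  obtain rfl | hn := Nat.eq_zero_or_pos n
  · have : IsEmpty V := Fintype.card_eq_zero_iff.1 hcard
    have : IsEmpty (Fin (0 - 1)) := Fin.isEmpty
    exact (hnotiso.false ⟨Equiv.equivOfIsEmpty _ _, fun {a} => isEmptyElim a⟩).elim
  have : Nonempty V := Fintype.card_pos_iff.1 (by omega)
  have hmin : ∀ v, n - 1 ≤ G.degree v := fun v => by
    have hv : G.degree v ∈ degreeMultiset G := Multiset.mem_map_of_mem _ (Finset.mem_univ v)
    rw [hdeg, Multiset.mem_add] at hv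
    rcases hv with hv | hv <;> rw [Multiset.eq_of_mem_replicate hv]
    omega
  exact exists_isHamiltonian_of_ore fun u v _ _ => by
    have := hmin u
    have := hmin v
    omega
end

section
/- Let m and n be natural numbers with m ≥ 3 and n = m+2, and let G be a simple graph in the class G_{m,n} that is bipartite with bipartition (V_1, V_2) satisfying |V_1| = |V_2|. Then G is Hamiltonian, i.e., G contains a cycle passing through every vertex exactly once. -/
open SimpleGraph

/-- `G` is bipartite with bipartition `(V₁, V₂)`: the two parts are nonempty, disjoint,
independent sets covering all vertices. -/
def IsBipartition {V : Type} (G : SimpleGraph V) (V₁ V₂ : Set V) : Prop :=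
  V₁.Nonempty ∧ V₂.Nonempty ∧ Disjoint V₁ V₂ ∧ V₁ ∪ V₂ = Set.univ ∧
  (∀ u ∈ V₁, ∀ v ∈ V₁, ¬ G.Adj u v) ∧ (∀ u ∈ V₂, ∀ v ∈ V₂, ¬ G.Adj u v)

open Finset Function

/- A vertex of degree `m + 1` in a bipartite graph with parts of size `m + 1` is adjacent to
the whole opposite part, and the degree sequence provides `m + 2` such vertices. Now let parts
`X`, `Y` of equal size `s ≥ 2` contain `P ⊆ X` complete to `Y` and `Q ⊆ Y` complete to `X` with
`|P| + |Q| > s`. Listing `X` with `P` first and `Y` with `Q` last, the closed walk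
`x₀ y₀ x₁ y₁ … x₍ₛ₋₁₎ y₍ₛ₋₁₎ x₀` is a Hamiltonian cycle: each of its edges is `x_a y_b` with
`a ≤ b + 1`, so `x_a ∈ P` or `y_b ∈ Q`. -/

section

variable {V : Type*} {G : SimpleGraph V}

theorem SimpleGraph.forall_adj_of_degree_eq_card {v : V} [Fintype (G.neighborSet v)]
    {Y : Finset V} (hsub : G.neighborFinset v ⊆ Y) (hdeg : G.degree v = #Y) :
    ∀ w ∈ Y, G.Adj v w := by
  have hY : G.neighborFinset v = Y :=
    eq_of_subset_of_card_le hsub (by rw [card_neighborFinset_eq_degree, hdeg])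
  intro w hw
  rwa [← mem_neighborFinset, hY]

variable [DecidableEq V]

theorem exists_isHamiltonianCycle_of_adj_succ [Fintype V] {N : ℕ} [NeZero N] (hN : 3 ≤ N)
    (e : Fin N → V) (he : Bijective e) (hadj : ∀ i, G.Adj (e i) (e (i + 1))) :
    ∃ (a : V) (p : G.Walk a a), p.IsHamiltonianCycle := by
  obtain ⟨n, rfl⟩ : ∃ n, N = n + 3 := ⟨N - 3, by omega⟩
  let f : cycleGraph (n + 3) →g G :=
    ⟨e, fun {u v} huv => by
      rcases cycleGraph_adj.1 huv with h | h
      · rw [← add_sub_cancel v u, h]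
        exact (hadj v).symm
      · rw [← add_sub_cancel u v, h]
        exact hadj u⟩
  have hcycle : (cycleGraph.cycle n).IsHamiltonianCycle :=
    Walk.isHamiltonianCycle_iff_isCycle_and_length_eq.2
      ⟨cycleGraph.isCycle_cycle, by simp⟩
  exact ⟨_, _, hcycle.map (f := f) he⟩

theorem exists_isHamiltonianCycle_of_ladder [Fintype V] {s : ℕ} (hs : 2 ≤ s) (x y : Fin s → V)
    (hxy : Bijective (Sum.elim x y))
    (hadj : ∀ a b : Fin s, (a : ℕ) ≤ b + 1 → G.Adj (x a) (y b)) :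
    ∃ (a : V) (p : G.Walk a a), p.IsHamiltonianCycle := by
  have : NeZero (s * 2) := ⟨by omega⟩
  let g : Fin (s * 2) → Fin s ⊕ Fin s := fun i =>
    if (i : ℕ) % 2 = 0 then .inl i.divNat else .inr i.divNat
  have hg : Bijective g := by
    refine (Fintype.bijective_iff_injective_and_card g).2 ⟨fun i j hij => ?_,
      by simp only [Fintype.card_sum, Fintype.card_fin]; omega⟩
    simp only [g] at hij
    split_ifs at hij <;>
      simp only [Sum.inl.injEq, Sum.inr.injEq, Fin.ext_iff, Fin.coe_divNat] at hij <;>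
      ext <;> omega
  refine exists_isHamiltonianCycle_of_adj_succ (by omega) _ (hxy.comp hg) fun i => ?_
  have hsucc : ((i + 1 : Fin (s * 2)) : ℕ) = if (i : ℕ) + 1 = s * 2 then 0 else (i : ℕ) + 1 := by
    rw [Fin.val_add, Fin.val_one', Nat.one_mod_eq_one.2 (by omega)]
    split_ifs with h
    · simp [h]
    · exact Nat.mod_eq_of_lt (by omega)
  have hi := i.isLt
  obtain ⟨k, hk | hk⟩ := Nat.even_or_odd' (i : ℕ)
  · have h₁ : ((i + 1 : Fin (s * 2)) : ℕ) = 2 * k + 1 := by rw [hsucc, if_neg (by omega), hk]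
    have h₂ : ((i + 1 : Fin (s * 2)) : ℕ) % 2 = 1 := by omega
    simp only [comp_apply, g, hk, h₂, Nat.mul_mod_right, if_pos, if_neg one_ne_zero,
      Sum.elim_inl, Sum.elim_inr]
    exact hadj _ _ (by simp only [Fin.coe_divNat, hk, h₁]; omega)
  · have h₁ : ((i + 1 : Fin (s * 2)) : ℕ) % 2 = 0 := by rw [hsucc]; split_ifs <;> omega
    have h₂ : (i : ℕ) % 2 = 1 := by omega
    simp only [comp_apply, g, h₁, h₂, if_pos, if_neg one_ne_zero, Sum.elim_inl, Sum.elim_inr]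
    exact (hadj _ _ (by simp only [Fin.coe_divNat, hsucc]; split_ifs <;> omega)).symm

theorem Finset.exists_enumeration_mem_iff_lt {X P : Finset V} {s : ℕ} (hX : #X = s)
    (hPX : P ⊆ X) :
    ∃ f : Fin s → V, Injective f ∧ Set.range f = X ∧ ∀ i, f i ∈ P ↔ (i : ℕ) < #P := by
  subst hX
  set L := P.toList ++ (X \ P).toList with hL
  have hlen : L.length = #X := by
    rw [hL, List.length_append, length_toList, length_toList, add_comm,
      card_sdiff_add_card_eq_card hPX]
  have hnodup : L.Nodup := by
    refine List.nodup_append.2 ⟨nodup_toList _, nodup_toList _, ?_⟩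
    simpa using fun a ha b _ hb hab => hb (hab ▸ ha)
  have hmem : ∀ v, v ∈ L ↔ v ∈ X := by
    intro v
    simp only [hL, List.mem_append, mem_toList, mem_sdiff]
    constructor
    · rintro (h | h)
      exacts [hPX h, h.1]
    · intro h; by_cases hP : v ∈ P <;> simp [h, hP]
  refine ⟨fun i => L[i.1], fun i j hij => Fin.ext ((hnodup.getElem_inj_iff).1 hij), ?_, ?_⟩
  · ext v
    simp only [Set.mem_range, mem_coe, ← hmem, List.mem_iff_getElem]
    exact ⟨fun ⟨i, hi⟩ => ⟨i, by omega, hi⟩, fun ⟨i, hi, hv⟩ => ⟨⟨i, by omega⟩, hv⟩⟩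
  · intro i
    simp only [hL, List.getElem_append]
    split_ifs with h <;> rw [length_toList] at h
    · exact iff_of_true (mem_toList.1 (List.getElem_mem _)) h
    · refine iff_of_false (fun hP => ?_) h
      have hcard := card_sdiff_add_card_eq_card hPX
      have hi := i.2
      exact (mem_sdiff.1 (mem_toList.1 (List.getElem_mem (by simp; omega)))).2 hP

theorem exists_isHamiltonianCycle_of_card_lt_card_add_card [Fintype V] {X Y P Q : Finset V}
    (hcover : ∀ v, v ∈ X ∨ v ∈ Y) (hXY : Disjoint X Y) (hcard : #X = #Y) (h2 : 2 ≤ #X)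
    (hPX : P ⊆ X) (hQY : Q ⊆ Y) (hP : ∀ u ∈ P, ∀ v ∈ Y, G.Adj u v)
    (hQ : ∀ v ∈ Q, ∀ u ∈ X, G.Adj u v) (hPQ : #X < #P + #Q) :
    ∃ (a : V) (p : G.Walk a a), p.IsHamiltonianCycle := by
  obtain ⟨x, hx_inj, hx_range, hxP⟩ := exists_enumeration_mem_iff_lt rfl hPX
  obtain ⟨y, hy_inj, hy_range, hyQ⟩ :=
    exists_enumeration_mem_iff_lt hcard.symm (sdiff_subset : Y \ Q ⊆ Y)
  have hxX (a) : x a ∈ X := by rw [← mem_coe, ← hx_range]; exact Set.mem_range_self a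
  have hyY (b) : y b ∈ Y := by rw [← mem_coe, ← hy_range]; exact Set.mem_range_self b
  refine exists_isHamiltonianCycle_of_ladder h2 x y ⟨?_, ?_⟩ fun a b hab => ?_
  · exact hx_inj.sumElim hy_inj fun a b hab => disjoint_left.1 hXY (hxX a) (hab ▸ hyY b)
  · intro v
    rcases hcover v with hv | hv
    · obtain ⟨a, rfl⟩ := (Set.ext_iff.1 hx_range v).2 hv
      exact ⟨.inl a, rfl⟩
    · obtain ⟨b, rfl⟩ := (Set.ext_iff.1 hy_range v).2 hv
      exact ⟨.inr b, rfl⟩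
  by_cases ha : (a : ℕ) < #P
  · exact hP _ ((hxP a).2 ha) _ (hyY b)
  · have hsdiff := card_sdiff_add_card_eq_card hQY
    have hyb : y b ∉ Y \ Q := fun h => by have := (hyQ b).1 h; omega
    exact hQ _ (by simpa [hyY b] using hyb) _ (hxX a)

end

theorem IsBipartition.symm {V : Type} {G : SimpleGraph V} {V₁ V₂ : Set V}
    (h : IsBipartition G V₁ V₂) : IsBipartition G V₂ V₁ := by
  obtain ⟨hne₁, hne₂, hdisj, hunion, hind₁, hind₂⟩ := h
  exact ⟨hne₂, hne₁, hdisj.symm, Set.union_comm V₁ V₂ ▸ hunion, hind₂, hind₁⟩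

theorem IsBipartition.adj_of_degree_eq_ncard {V : Type} [Fintype V] {G : SimpleGraph V}
    [DecidableRel G.Adj] {V₁ V₂ : Set V} (h : IsBipartition G V₁ V₂) {u : V} (hu : u ∈ V₁)
    (hdeg : G.degree u = V₂.ncard) {w : V} (hw : w ∈ V₂) : G.Adj u w := by
  classical
  obtain ⟨-, -, -, hunion, hind₁, -⟩ := h
  refine G.forall_adj_of_degree_eq_card (Y := V₂.toFinset) (fun x hx => ?_)
    (by rwa [← Set.ncard_eq_toFinset_card']) w (Set.mem_toFinset.2 hw)
  have hx' : x ∈ V₁ ∪ V₂ := hunion ▸ Set.mem_univ x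
  exact Set.mem_toFinset.2 <| hx'.resolve_left fun hx₁ => hind₁ u hu x hx₁ <|
    (mem_neighborFinset ..).1 hx

theorem card_filter_degree_eq_count_degreeMultiset {V : Type} [Fintype V] [DecidableEq V]
    (G : SimpleGraph V) [DecidableRel G.Adj] (d : ℕ) :
    #{v | G.degree v = d} = (degreeMultiset G).count d := by
  rw [degreeMultiset, Multiset.count_map, card_def, filter_val]
  simp only [eq_comm]

theorem stmt_9 (m n : ℕ) (hm : 3 ≤ m) (hn : n = m + 2) {V : Type} [Fintype V] [DecidableEq V]
    (G : SimpleGraph V) [DecidableRel G.Adj] (hG : MemGmn m n G)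
    (V₁ V₂ : Set V) (hbip : IsBipartition G V₁ V₂) (heq : V₁.ncard = V₂.ncard) :
    ∃ (a : V) (p : G.Walk a a), p.IsHamiltonianCycle := by
  obtain ⟨hcardV, hdeg, -⟩ := hG
  subst hn
  obtain ⟨X, rfl⟩ := V₁.toFinite.exists_finset_coe
  obtain ⟨Y, rfl⟩ := V₂.toFinite.exists_finset_coe
  simp only [Set.ncard_coe_finset] at heq
  obtain ⟨-, -, hdisj, hunion, -, -⟩ := id hbip
  have hXY : Disjoint X Y := disjoint_coe.1 hdisj
  have hXYuniv : X ∪ Y = univ := by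
    rw [← coe_inj, coe_union, coe_univ]
    exact hunion
  have hcover (v : V) : v ∈ X ∨ v ∈ Y := mem_union.1 (hXYuniv ▸ mem_univ v)
  have hX : #X = m + 1 := by
    have : #X + #Y = m + (m + 2) := by
      rw [← card_union_of_disjoint hXY, hXYuniv, card_univ, hcardV]
    omega
  set P := X.filter (fun v => G.degree v = m + 1)
  set Q := Y.filter (fun v => G.degree v = m + 1)
  have hPQ : #P + #Q = m + 2 := by
    rw [← card_union_of_disjoint (disjoint_filter_filter hXY), ← filter_union, hXYuniv,
      card_filter_degree_eq_count_degreeMultiset, hdeg]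
    simp [Multiset.count_replicate]
  refine exists_isHamiltonianCycle_of_card_lt_card_add_card (P := P) (Q := Q) hcover hXY heq
    (by omega) (filter_subset _ X) (filter_subset _ Y) (fun u hu v hv => ?_)
    (fun v hv u hu => ?_) (by omega)
  · obtain ⟨huX, hdegu⟩ := mem_filter.1 hu
    exact hbip.adj_of_degree_eq_ncard huX (by rw [Set.ncard_coe_finset]; omega) hv
  · obtain ⟨hvY, hdegv⟩ := mem_filter.1 hv
    exact (hbip.symm.adj_of_degree_eq_ncard hvY (by rw [Set.ncard_coe_finset]; omega) hu).symm
end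

section
/- Let m and n be natural numbers with m ≥ 3 and n = m+1, and let G be a simple graph in the class G_{m,n} that is bipartite with bipartition (V_1, V_2) satisfying |V_1| = m and |V_2| = n. Then G is traceable, i.e., G contains a Hamiltonian path. -/
open SimpleGraph

/-! The degree sum is `m (m - 1) + (m + 1) m = 2 m²` and each side of the bipartition carries half
of it. As all degrees are at most `m`, every `v ∈ V₁` has degree `m`, i.e. misses exactly one vertex
`μ v ∈ V₂`; as all degrees are at least `m - 1`, `μ` is injective. So `G` is `K_{m,m+1}` minus a
matching of size `m`, and the unmatched `z ∈ V₂` is adjacent to all of `V₁`. Enumerating `V₁` as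
`a₀, …, a_{m-1}` with indices in `ZMod m`, the path
`z, a₀, μ a₋₁, a₁, μ a₀, a₂, μ a₁, …, a_{m-1}, μ a_{m-2}` is Hamiltonian: its edges
`a_k — μ a_{k-1} — a_{k+1}` exist because `1 ≠ 0` and `2 ≠ 0` in `ZMod m` for `m ≥ 3`. -/

namespace SimpleGraph

variable {V : Type*} {G : SimpleGraph V}

theorem exists_isHamiltonian_of_surjOn [Fintype V] [DecidableEq V] {N : ℕ} (f : ℕ → V)
    (hadj : ∀ i < N, G.Adj (f i) (f (i + 1))) (hsurj : Set.SurjOn f (Set.Iic N) Set.univ)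
    (hcard : Fintype.card V = N + 1) : ∃ (u w : V) (p : G.Walk u w), p.IsHamiltonian := by
  set F : Fin (N + 1) → V := fun i => f i
  have hF : F.Bijective := by
    refine (Fintype.bijective_iff_surjective_and_card F).2 ⟨fun v => ?_, by simp [hcard]⟩
    obtain ⟨i, hi, rfl⟩ := hsurj (Set.mem_univ v)
    exact ⟨⟨i, Nat.lt_succ_of_le hi⟩, rfl⟩
  have hchain : (List.ofFn F).IsChain G.Adj :=
    List.isChain_ofFn.2 fun i hi => hadj i (by omega)
  refine ⟨_, _, Walk.ofSupport _ (by simp) hchain, fun v => ?_⟩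
  rw [Walk.support_ofSupport]
  exact List.count_eq_one_of_mem (List.nodup_ofFn.2 hF.1) (List.mem_ofFn.2 (hF.2 v))

def zigzag (z : V) (a b : ℕ → V) : ℕ → V
  | 0 => z
  | i + 1 => if i % 2 = 0 then a (i / 2) else b (i / 2)

@[simp] lemma zigzag_zero (z : V) (a b : ℕ → V) : zigzag z a b 0 = z := rfl

@[simp] lemma zigzag_odd (z : V) (a b : ℕ → V) (k : ℕ) : zigzag z a b (2 * k + 1) = a k := by
  simp [zigzag]

@[simp] lemma zigzag_even (z : V) (a b : ℕ → V) (k : ℕ) : zigzag z a b (2 * k + 2) = b k := by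
  simp only [zigzag, if_neg (by omega : (2 * k + 1) % 2 ≠ 0)]
  congr 1
  omega

open Finset in
theorem exists_isHamiltonian_of_adj_partner_of_ne [Fintype V] [DecidableEq V] {s : Finset V}
    (hs : 3 ≤ #s) (hcard : Fintype.card V = 2 * #s + 1) (μ : V → V) (z : V)
    (hcover : ∀ v, v ∈ s ∨ v = z ∨ ∃ u ∈ s, μ u = v)
    (hz : ∀ u ∈ s, G.Adj z u) (hμ : ∀ u ∈ s, ∀ u' ∈ s, u ≠ u' → G.Adj u (μ u')) :
    ∃ (u w : V) (p : G.Walk u w), p.IsHamiltonian := by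
  set m := #s
  have : NeZero m := ⟨by omega⟩
  let e : ZMod m ≃ s := Fintype.equivOfCardEq (by simp [m])
  have he : ∀ k, (e k : V) ∈ s := fun k => (e k).2
  have hne : ∀ {k l : ZMod m}, k ≠ l → (e k : V) ≠ e l :=
    fun h h' => h (e.injective (Subtype.ext h'))
  have hsmall : ∀ d : ℕ, 0 < d → d < m → (d : ZMod m) ≠ 0 := fun d hd hdm h =>
    absurd (Nat.le_of_dvd hd ((ZMod.natCast_eq_zero_iff d m).1 h)) (by omega)
  have hone : (1 : ZMod m) ≠ 0 := by exact_mod_cast hsmall 1 (by omega) (by omega)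
  have htwo : (2 : ZMod m) ≠ 0 := by exact_mod_cast hsmall 2 (by omega) (by omega)
  refine exists_isHamiltonian_of_surjOn (N := 2 * m)
    (zigzag z (fun k => e k) (fun k => μ (e (k - 1)))) (fun i _ => ?_) (fun v _ => ?_) hcard
  · obtain ⟨k, rfl | rfl⟩ := Nat.even_or_odd' i
    · rcases k with _ | k
      · rw [zigzag_odd, mul_zero, zigzag_zero, Nat.cast_zero]
        exact hz _ (he 0)
      · rw [show 2 * (k + 1) = 2 * k + 2 by ring, zigzag_even, show 2 * k + 2 + 1 = 2 * (k + 1) + 1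
          by ring, zigzag_odd]
        refine (hμ _ (he _) _ (he _) (hne fun h => htwo ?_)).symm
        push_cast at h
        linear_combination h
    · rw [zigzag_odd, zigzag_even]
      exact hμ _ (he _) _ (he _) (hne fun h => hone (by linear_combination h))
  · rcases hcover v with hv | rfl | ⟨u, hu, rfl⟩
    · have := ZMod.val_lt (e.symm ⟨v, hv⟩)
      exact ⟨2 * (e.symm ⟨v, hv⟩).val + 1, Set.mem_Iic.2 (by omega), by simp⟩
    · exact ⟨0, Nat.zero_le _, rfl⟩
    · have := ZMod.val_lt (e.symm ⟨u, hu⟩ + 1)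
      exact ⟨2 * (e.symm ⟨u, hu⟩ + 1).val + 2, Set.mem_Iic.2 (by omega), by simp⟩

open Finset in
lemma two_mul_sum_degrees_eq_of_isBipartiteWith [Fintype V] [DecidableRel G.Adj] {s t : Finset V}
    (h : G.IsBipartiteWith s t) : 2 * ∑ v ∈ s, G.degree v = ∑ v, G.degree v := by
  rw [isBipartiteWith_sum_degrees_eq_card_edges h, sum_degrees_eq_twice_card_edges]

open Finset in
theorem exists_isHamiltonian_of_isBipartiteWith [Fintype V] [DecidableEq V] [DecidableRel G.Adj]
    {s t : Finset V} (h : G.IsBipartiteWith s t) (hcover : ∀ v, v ∈ s ∨ v ∈ t) (hs : 3 ≤ #s)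
    (ht : #t = #s + 1) (hdeg_s : ∀ v ∈ s, G.degree v + 1 = #t)
    (hdeg_t : ∀ w ∈ t, #s ≤ G.degree w + 1) :
    ∃ (u w : V) (p : G.Walk u w), p.IsHamiltonian := by
  have hnon_s : ∀ v ∈ s, #(t \ G.neighborFinset v) = 1 := fun v hv => by
    rw [card_sdiff_of_subset (isBipartiteWith_neighborFinset_subset h hv),
      card_neighborFinset_eq_degree]
    have := hdeg_s v hv
    omega
  have hnon_t : ∀ w ∈ t, #(s \ G.neighborFinset w) ≤ 1 := fun w hw => by
    rw [card_sdiff_of_subset (isBipartiteWith_neighborFinset_subset' h hw),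
      card_neighborFinset_eq_degree]
    have := hdeg_t w hw
    omega
  choose! μ hμ using fun v hv => card_eq_one.1 (hnon_s v hv)
  have hμ_mem : ∀ v ∈ s, μ v ∈ t ∧ ¬ G.Adj v (μ v) := fun v hv => by
    simpa [← hμ v hv] using mem_singleton_self (μ v)
  have hadj : ∀ v ∈ s, ∀ w ∈ t, w ≠ μ v → G.Adj v w := fun v hv w hw hne => by
    by_contra hna
    exact hne (mem_singleton.1 (hμ v hv ▸ mem_sdiff.2 ⟨hw, by simpa using hna⟩))
  -- `u` and `u'` would be two non-neighbours of `μ u'` in `s`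
  have hcross : ∀ u ∈ s, ∀ u' ∈ s, u ≠ u' → G.Adj u (μ u') := fun u hu u' hu' hne => by
    by_contra hna
    refine hne (card_le_one.1 (hnon_t _ (hμ_mem u' hu').1) u ?_ u' ?_)
    · simpa [hu, adj_comm] using hna
    · simpa [hu', adj_comm] using (hμ_mem u' hu').2
  have hinj : Set.InjOn μ s := fun u hu u' hu' heq => by
    by_contra hne
    exact (hμ_mem u hu).2 (heq ▸ hcross u hu u' hu' hne)
  have himage : image μ s ⊆ t := fun w hw => by
    obtain ⟨v, hv, rfl⟩ := mem_image.1 hw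
    exact (hμ_mem v hv).1
  obtain ⟨z, hz⟩ : ∃ z, t \ image μ s = {z} := card_eq_one.1 (by
    rw [card_sdiff_of_subset himage, card_image_of_injOn hinj]
    omega)
  have hz_mem : z ∈ t ∧ z ∉ image μ s := mem_sdiff.1 (hz ▸ mem_singleton_self z)
  refine exists_isHamiltonian_of_adj_partner_of_ne hs ?_ μ z (fun v => ?_) (fun u hu => ?_) hcross
  · rw [← card_univ, ← eq_univ_iff_forall.2 fun v => mem_union.2 (hcover v),
      card_union_of_disjoint (disjoint_coe.1 h.disjoint)]
    omega
  · rcases hcover v with hv | hv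
    · exact Or.inl hv
    · by_cases hvμ : v ∈ image μ s
      · exact Or.inr (Or.inr (mem_image.1 hvμ))
      · exact Or.inr (Or.inl (mem_singleton.1 (hz ▸ mem_sdiff.2 ⟨hv, hvμ⟩)))
  · exact (hadj u hu z hz_mem.1 fun h => hz_mem.2 (h ▸ mem_image_of_mem μ hu)).symm

end SimpleGraph

lemma IsBipartition.isBipartiteWith {V : Type} {G : SimpleGraph V} {V₁ V₂ : Set V}
    (h : IsBipartition G V₁ V₂) : G.IsBipartiteWith V₁ V₂ := by
  obtain ⟨-, -, hdisj, hunion, hind₁, hind₂⟩ := h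
  refine ⟨hdisj, fun v w hvw => ?_⟩
  have hv : v ∈ V₁ ∪ V₂ := hunion ▸ Set.mem_univ v
  have hw : w ∈ V₁ ∪ V₂ := hunion ▸ Set.mem_univ w
  rcases hv with hv | hv <;> rcases hw with hw | hw
  · exact absurd hvw (hind₁ v hv w hw)
  · exact Or.inl ⟨hv, hw⟩
  · exact Or.inr ⟨hv, hw⟩
  · exact absurd hvw (hind₂ v hv w hw)

section MemGmn

variable {V : Type} [Fintype V] [DecidableEq V] {G : SimpleGraph V} [DecidableRel G.Adj]
  {m n : ℕ}

lemma MemGmn.degree_eq (hG : MemGmn m n G) (v : V) : G.degree v = m - 1 ∨ G.degree v = n - 1 := by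
  have hv : G.degree v ∈ degreeMultiset G := Multiset.mem_map_of_mem _ (Finset.mem_univ v)
  rw [hG.2.1, Multiset.mem_add] at hv
  exact hv.imp Multiset.eq_of_mem_replicate Multiset.eq_of_mem_replicate

lemma MemGmn.sum_degrees (hG : MemGmn m n G) :
    ∑ v, G.degree v = m * (m - 1) + n * (n - 1) := by
  rw [show ∑ v, G.degree v = (degreeMultiset G).sum from rfl, hG.2.1]
  simp

end MemGmn

open Finset in
theorem stmt_10 (m n : ℕ) (hm : 3 ≤ m) (hn : n = m + 1) {V : Type} [Fintype V] [DecidableEq V]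
    (G : SimpleGraph V) [DecidableRel G.Adj] (hG : MemGmn m n G)
    (V₁ V₂ : Set V) (hbip : IsBipartition G V₁ V₂)
    (h1 : V₁.ncard = m) (h2 : V₂.ncard = n) :
    ∃ (u w : V) (p : G.Walk u w), p.IsHamiltonian := by
  classical
  subst hn
  set s := V₁.toFinset
  set t := V₂.toFinset
  have hst : G.IsBipartiteWith s t := by simpa [s, t] using hbip.isBipartiteWith
  have hcover : ∀ v, v ∈ s ∨ v ∈ t := fun v => by
    have : v ∈ V₁ ∪ V₂ := hbip.2.2.2.1 ▸ Set.mem_univ v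
    simpa [s, t] using this
  have hs : #s = m := by rw [← h1, Set.ncard_eq_toFinset_card']
  have ht : #t = m + 1 := by rw [← h2, Set.ncard_eq_toFinset_card']
  have hdeg_le : ∀ v, G.degree v ≤ m := fun v => by rcases hG.degree_eq v with h | h <;> omega
  have hsum_s : ∑ v ∈ s, G.degree v = ∑ _v ∈ s, m := by
    have htwice := two_mul_sum_degrees_eq_of_isBipartiteWith hst
    rw [hG.sum_degrees, Nat.add_sub_cancel] at htwice
    rw [sum_const, hs, smul_eq_mul]
    qify [show 1 ≤ m by omega] at htwice ⊢
    linear_combination htwice / 2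
  have hdeg_s := (sum_eq_sum_iff_of_le fun v _ => hdeg_le v).1 hsum_s
  refine exists_isHamiltonian_of_isBipartiteWith hst hcover (by omega) (by omega)
    (fun v hv => by rw [hdeg_s v hv]; omega) (fun w _ => ?_)
  rcases hG.degree_eq w with h | h <;> omega
end

section
/- Let G be a simple graph on a finite vertex set V with |V| = n. Define the simple graph G' on the vertex set V × {1,2} by: (x,i) is adjacent to (y,i) in G' (for i = 1,2) if and only if x is adjacent to y in G, and (x,1) is adjacent to (y,2) in G' if and only if x ≠ y and x is not adjacent to y in G. Then every vertex of G' has degree n−1, and the independence numbers satisfy α(G) ≤ α(G') ≤ 2·α(G). -/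
/-! Both sides of `G'` are copies of `G`: an independent set of `G` is one of `G'` on the left,
and an independent set of `G'` splits into two independent sets of `G`. A vertex `(x, i)` is
adjacent to the `G`-neighbours of `x` on its own side and to the `Gᶜ`-neighbours of `x` on the
other, and `deg_G x + deg_Gᶜ x = n - 1`. -/

open SimpleGraph

/-- The independence number of a finite simple graph: the maximum cardinality of a set of
pairwise non-adjacent vertices. -/
noncomputable def indepNum {V : Type} [Fintype V] (G : SimpleGraph V) : ℕ :=
  sSup {k | ∃ s : Finset V, (∀ u ∈ s, ∀ v ∈ s, ¬ G.Adj u v) ∧ s.card = k}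

open Finset

theorem indepNum_eq_simpleGraph_indepNum {V : Type} [Fintype V] (G : SimpleGraph V) :
    _root_.indepNum G = G.indepNum := by
  have hpair : ∀ s : Finset V,
      (∀ u ∈ s, ∀ v ∈ s, ¬ G.Adj u v) ↔ G.IsIndepSet (s : Set V) := fun s =>
    ⟨fun h u hu v hv _ => h u hu v hv, fun h u hu v hv huv => h hu hv huv.ne huv⟩
  simp only [_root_.indepNum, SimpleGraph.indepNum, isNIndepSet_iff, hpair]

namespace SimpleGraph

variable {V W : Type*}

theorem indepNum_comap_le [Finite V] [Finite W] (H : SimpleGraph W) {f : V → W}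
    (hf : Function.Injective f) : (H.comap f).indepNum ≤ H.indepNum := by
  classical
  obtain ⟨s, hs, hcard⟩ := (H.comap f).exists_isNIndepSet_indepNum
  rw [← hcard, ← card_map ⟨f, hf⟩]
  refine IsIndepSet.card_le_indepNum ?_
  rintro _ ha _ hb hne
  simp only [coe_map, Function.Embedding.coeFn_mk, Set.mem_image, mem_coe] at ha hb
  obtain ⟨a, ha, rfl⟩ := ha
  obtain ⟨b, hb, rfl⟩ := hb
  exact hs ha hb (ne_of_apply_ne f hne)

theorem indepNum_le_indepNum_comap_inl_add_indepNum_comap_inr [Finite V] [Finite W]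
    (H : SimpleGraph (V ⊕ W)) :
    H.indepNum ≤ (H.comap Sum.inl).indepNum + (H.comap Sum.inr).indepNum := by
  obtain ⟨t, ht, hcard⟩ := H.exists_isNIndepSet_indepNum
  rw [← hcard, ← card_toLeft_add_card_toRight (u := t)]
  refine add_le_add (IsIndepSet.card_le_indepNum ?_) (IsIndepSet.card_le_indepNum ?_)
  · exact fun a ha b hb hne => ht (mem_toLeft.mp ha) (mem_toLeft.mp hb) (by simpa using hne)
  · exact fun a ha b hb hne => ht (mem_toRight.mp ha) (mem_toRight.mp hb) (by simpa using hne)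

theorem degree_add_degree_compl [Fintype V] [DecidableEq V] (G : SimpleGraph V)
    [DecidableRel G.Adj] (v : V) : G.degree v + Gᶜ.degree v = Fintype.card V - 1 := by
  have := G.degree_lt_card_verts v
  rw [degree_compl]
  omega

end SimpleGraph

theorem stmt_17_general {V : Type} [Fintype V] (n : ℕ) (hn : Fintype.card V = n)
    (G : SimpleGraph V)
    (G' : SimpleGraph (V ⊕ V)) [DecidableRel G'.Adj]
    (h1 : ∀ x y : V, G'.Adj (Sum.inl x) (Sum.inl y) ↔ G.Adj x y)
    (h2 : ∀ x y : V, G'.Adj (Sum.inr x) (Sum.inr y) ↔ G.Adj x y)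
    (h3 : ∀ x y : V, G'.Adj (Sum.inl x) (Sum.inr y) ↔ (x ≠ y ∧ ¬ G.Adj x y)) :
    (∀ w : V ⊕ V, G'.degree w = n - 1) ∧
    _root_.indepNum G ≤ _root_.indepNum G' ∧ _root_.indepNum G' ≤ 2 * _root_.indepNum G := by
  classical
  have hinl : G'.comap Sum.inl = G := by ext; exact h1 _ _
  have hinr : G'.comap Sum.inr = G := by ext; exact h2 _ _
  have hcross : ∀ x y : V, G'.Adj (Sum.inr x) (Sum.inl y) ↔ Gᶜ.Adj x y := fun x y => by
    rw [adj_comm, h3, compl_adj, ne_comm, G.adj_comm]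
  have hdeg (x : V) : G.degree x + Gᶜ.degree x = n - 1 := hn ▸ G.degree_add_degree_compl x
  simp only [indepNum_eq_simpleGraph_indepNum, ← card_neighborFinset_eq_degree] at hdeg ⊢
  refine ⟨?_, ?_, ?_⟩
  · rintro (x | x)
    · have : G'.neighborFinset (.inl x) = (G.neighborFinset x).disjSum (Gᶜ.neighborFinset x) := by
        ext (y | y) <;> simp [h1, h3]
      rw [this, card_disjSum, hdeg]
    · have : G'.neighborFinset (.inr x) = (Gᶜ.neighborFinset x).disjSum (G.neighborFinset x) := by
        ext (y | y) <;> simp [h2, hcross]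
      rw [this, card_disjSum, add_comm, hdeg]
  · simpa [hinl] using G'.indepNum_comap_le Sum.inl_injective
  · simpa [hinl, hinr, two_mul] using G'.indepNum_le_indepNum_comap_inl_add_indepNum_comap_inr

theorem stmt_17 {V : Type} [Fintype V] [DecidableEq V] (n : ℕ) (hn : Fintype.card V = n)
    (G : SimpleGraph V)
    (G' : SimpleGraph (V ⊕ V)) [DecidableRel G'.Adj]
    (h1 : ∀ x y : V, G'.Adj (Sum.inl x) (Sum.inl y) ↔ G.Adj x y)
    (h2 : ∀ x y : V, G'.Adj (Sum.inr x) (Sum.inr y) ↔ G.Adj x y)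
    (h3 : ∀ x y : V, G'.Adj (Sum.inl x) (Sum.inr y) ↔ (x ≠ y ∧ ¬ G.Adj x y)) :
    (∀ w : V ⊕ V, G'.degree w = n - 1) ∧
    _root_.indepNum G ≤ _root_.indepNum G' ∧ _root_.indepNum G' ≤ 2 * _root_.indepNum G :=
  stmt_17_general n hn G G' h1 h2 h3
end

section
/- Let n be a natural number and let G be a simple graph on 2n vertices in which every vertex has degree n and which is not isomorphic to the complete bipartite graph K_{n,n}. Then G contains a triangle, i.e., three pairwise adjacent vertices. -/
/-! In a triangle-free graph the neighbourhoods of two adjacent vertices `u`, `v` are disjoint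
independent sets. If the graph is `n`-regular on `2n` vertices they have `n` elements each, so
they partition the vertex set, every edge crosses the partition, and by counting degrees every
crossing pair is an edge: the graph is `K_{n,n}`. -/

open SimpleGraph

namespace SimpleGraph

open Finset

variable {V : Type*} {G : SimpleGraph V}

theorem CliqueFree.disjoint_neighborFinset_of_adj [Fintype V] [DecidableRel G.Adj]
    (hG : G.CliqueFree 3) {u v : V} (huv : G.Adj u v) :
    Disjoint (G.neighborFinset u) (G.neighborFinset v) := by
  classical
  refine Finset.disjoint_left.mpr fun w hu hv => hG {u, v, w} ?_
  rw [mem_neighborFinset] at hu hv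
  exact is3Clique_triple_iff.mpr ⟨huv, hu, hv⟩

theorem CliqueFree.neighborFinset_eq_compl_of_adj [Fintype V] [DecidableEq V] [DecidableRel G.Adj]
    {n : ℕ} (hG : G.CliqueFree 3) (hreg : G.IsRegularOfDegree n)
    (hcard : Fintype.card V = 2 * n) {u v : V} (huv : G.Adj u v) :
    G.neighborFinset v = (G.neighborFinset u)ᶜ := by
  refine eq_of_subset_of_card_le ?_ ?_
  · exact Finset.subset_compl_iff_disjoint_left.mpr (hG.disjoint_neighborFinset_of_adj huv)
  · rw [card_compl, card_neighborFinset_eq_degree, card_neighborFinset_eq_degree, hreg u,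
      hreg v, hcard]
    omega

theorem adj_iff_of_isIndepSet_of_isIndepSet_compl [Fintype V] [DecidableEq V]
    [DecidableRel G.Adj] {n : ℕ} {s : Finset V} (hs : G.IsIndepSet s) (hsc : G.IsIndepSet ↑sᶜ)
    (hreg : G.IsRegularOfDegree n) (hs_card : #s = n) (hcard : Fintype.card V = 2 * n)
    (v w : V) : G.Adj v w ↔ (v ∈ s ↔ w ∉ s) := by
  have mem_iff_of_adj {x y : V} (hxy : G.Adj x y) : x ∈ s ↔ y ∉ s := by
    by_cases hx : x ∈ s <;> by_cases hy : y ∈ s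
    · exact absurd hxy (hs hx hy hxy.ne)
    · simp [hx, hy]
    · simp [hx, hy]
    · exact absurd hxy (hsc (by simpa using hx) (by simpa using hy) hxy.ne)
  have adj_of_mem_of_notMem {x y : V} (hx : x ∈ s) (hy : y ∉ s) : G.Adj x y := by
    have : G.neighborFinset x = sᶜ := by
      refine eq_of_subset_of_card_le (fun z hz => ?_) ?_
      · exact mem_compl.mpr ((mem_iff_of_adj ((G.mem_neighborFinset x z).mp hz)).mp hx)
      · rw [card_compl, card_neighborFinset_eq_degree, hreg x, hs_card, hcard]
        omega
    rw [← mem_neighborFinset, this, mem_compl]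
    exact hy
  refine ⟨mem_iff_of_adj, fun h => ?_⟩
  by_cases hv : v ∈ s
  · exact adj_of_mem_of_notMem hv (h.mp hv)
  · exact (adj_of_mem_of_notMem (not_not.mp (mt h.mpr hv)) hv).symm

def isoCompleteBipartiteGraphOfAdjIff (p : V → Prop) [DecidablePred p]
    (h : ∀ v w, G.Adj v w ↔ (p v ↔ ¬ p w)) :
    G ≃g completeBipartiteGraph {v // p v} {v // ¬ p v} where
  toEquiv := (Equiv.sumCompl p).symm
  map_rel_iff' {v w} := by
    by_cases hv : p v <;> by_cases hw : p w <;> simp [h, hv, hw]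

theorem CliqueFree.exists_finset_adj_iff [Fintype V] [DecidableEq V] [DecidableRel G.Adj]
    {n : ℕ} (hG : G.CliqueFree 3) (hreg : G.IsRegularOfDegree n)
    (hcard : Fintype.card V = 2 * n) :
    ∃ s : Finset V, #s = n ∧ ∀ v w, G.Adj v w ↔ (v ∈ s ↔ w ∉ s) := by
  rcases isEmpty_or_nonempty V with hV | ⟨⟨v⟩⟩
  · exact ⟨∅, by simp_all, fun v => isEmptyElim v⟩
  obtain ⟨u, hvu⟩ : ∃ u, G.Adj v u := by
    rw [← degree_pos_iff_exists_adj, hreg v]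
    have := Fintype.card_pos_iff.mpr ⟨v⟩
    omega
  have hcompl := hG.neighborFinset_eq_compl_of_adj hreg hcard hvu
  have hcard_nbhd : #(G.neighborFinset v) = n := (card_neighborFinset_eq_degree ..).trans (hreg v)
  refine ⟨G.neighborFinset v, hcard_nbhd,
    adj_iff_of_isIndepSet_of_isIndepSet_compl ?_ ?_ hreg hcard_nbhd hcard⟩
  · rw [coe_neighborFinset]
    exact isIndepSet_neighborSet_of_triangleFree G hG v
  · rw [← hcompl, coe_neighborFinset]
    exact isIndepSet_neighborSet_of_triangleFree G hG u

theorem CliqueFree.nonempty_iso_completeBipartiteGraph [Fintype V] [DecidableRel G.Adj] {n : ℕ}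
    (hG : G.CliqueFree 3) (hreg : G.IsRegularOfDegree n) (hcard : Fintype.card V = 2 * n) :
    Nonempty (G ≃g completeBipartiteGraph (Fin n) (Fin n)) := by
  classical
  obtain ⟨s, hs, hadj⟩ := hG.exists_finset_adj_iff hreg hcard
  have hsc : Fintype.card {v // v ∉ s} = n := by
    rw [Fintype.card_subtype_compl, Fintype.card_coe, hs, hcard]
    omega
  exact ⟨(isoCompleteBipartiteGraphOfAdjIff (· ∈ s) hadj).trans
    (completeBipartiteGraphCongr (Fintype.equivFinOfCardEq ((Fintype.card_coe s).trans hs))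
      (Fintype.equivFinOfCardEq hsc))⟩

end SimpleGraph

theorem stmt_19 (n : ℕ) {V : Type} [Fintype V] (G : SimpleGraph V) [DecidableRel G.Adj]
    (hcard : Fintype.card V = 2 * n)
    (hdeg : ∀ v : V, G.degree v = n)
    (hnotiso : IsEmpty (G ≃g completeBipartiteGraph (Fin n) (Fin n))) :
    ∃ a b c : V, G.Adj a b ∧ G.Adj a c ∧ G.Adj b c := by
  classical
  by_contra hfree
  refine hnotiso.false (CliqueFree.nonempty_iso_completeBipartiteGraph ?_ hdeg hcard).some
  intro s hs
  obtain ⟨a, b, c, hab, hac, hbc, -⟩ := is3Clique_iff.mp hs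
  exact hfree ⟨a, b, c, hab, hac, hbc⟩
end
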